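/- arXiv:1403.0881 — 4 statements merged into one kernel-verified Lean document; each statement's English description precedes it below -/
import Mathlib

section
/- For all integers d ≥ 1, k ≥ 2, n ≥ 0, the inclusion map M_d^{(k)}(n) ↪ M_d^{(k+1)}(n) (a continuous map between subspaces of (ℝ^d)^n, well defined since the no-k-equal condition implies the no-(k+1)-equal condition) is null-homotopic. -/
/-!
Move the points one at a time, the `i`-th along a segment to `(r + i) • e`, where `e` is a unit
vector and `r` exceeds the norms of all points. At every moment the unmoved points have no `k`
equal among them, while a point already moved can coincide only with the single point in motion;
as `k + 1 ≥ 3`, no `k + 1` points ever coincide. At the end the configuration lies on the line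
`r ↦ ((r + i) • e)ᵢ` of configurations of distinct points, along which it slides to a constant.
-/

/-- The no-`k`-equal space `M_d^{(k)}(n)`: tuples of `n` points of `ℝ^d` such that
no `k` of them are all equal. -/
def noKEqual (d k n : ℕ) : Set (Fin n → EuclideanSpace ℝ (Fin d)) :=
  {x | ∀ I : Finset (Fin n), I.card = k → ∃ i ∈ I, ∃ j ∈ I, x i ≠ x j}

/-- The no-`k`-equal condition implies the no-`(k+1)`-equal condition. -/
lemma noKEqual_subset_succ (d k n : ℕ) : noKEqual d k n ⊆ noKEqual d (k + 1) n := by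
  intro x hx I hI
  obtain ⟨t, hts, htc⟩ := Finset.exists_subset_card_eq (s := I) (n := k) (by omega)
  obtain ⟨i, hi, j, hj, hij⟩ := hx t htc
  exact ⟨i, hts hi, j, hts hj, hij⟩

open Function Set

section Spread

variable {E : Type*} [NormedAddCommGroup E] [NormedSpace ℝ E] {n : ℕ}

def spread (e : E) (r : ℝ) : Fin n → E := fun i => (r + i) • e

lemma spread_injective {e : E} (he : e ≠ 0) (r : ℝ) : Injective (spread (n := n) e r) := by
  intro i j h
  have hij : r + i = r + j := smul_left_injective ℝ he h
  exact Fin.val_injective (by exact_mod_cast add_left_cancel hij)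

lemma norm_spread {e : E} (he : ‖e‖ = 1) {r : ℝ} (hr : 0 ≤ r) (i : Fin n) :
    ‖spread e r i‖ = r + i := by
  rw [spread, norm_smul, he, mul_one, Real.norm_of_nonneg (by positivity)]

lemma spread_ne_of_norm_lt {e : E} (he : ‖e‖ = 1) {r : ℝ} {v : E} (hv : ‖v‖ < r) (i : Fin n) :
    spread e r i ≠ v := by
  intro h
  have := norm_spread he ((norm_nonneg v).trans hv.le) i
  rw [h] at this
  linarith [(i : ℕ).cast_nonneg (α := ℝ)]

@[fun_prop]
lemma Continuous.spread {X : Type*} [TopologicalSpace X] (e : E) {r : X → ℝ} (hr : Continuous r) :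
    Continuous fun x => spread (n := n) e (r x) :=
  continuous_pi fun _ => by unfold _root_.spread; fun_prop

end Spread

section SequentialMove

variable {E : Type*} [NormedAddCommGroup E] [NormedSpace ℝ E] {n : ℕ}

noncomputable def sequentialMove (x y : Fin n → E) (s : ℝ) : Fin n → E :=
  fun i => AffineMap.lineMap (x i) (y i) (projIcc (0 : ℝ) 1 zero_le_one (s - i) : ℝ)

variable {x y : Fin n → E} {s : ℝ} {i : Fin n}

lemma sequentialMove_of_le (h : s ≤ i) : sequentialMove x y s i = x i := by
  rw [sequentialMove, projIcc_of_le_left _ (by linarith)]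
  exact AffineMap.lineMap_apply_zero _ _

lemma sequentialMove_of_add_one_le (h : (i : ℝ) + 1 ≤ s) : sequentialMove x y s i = y i := by
  rw [sequentialMove, projIcc_of_right_le _ (by linarith)]
  exact AffineMap.lineMap_apply_one _ _

lemma sequentialMove_zero : sequentialMove x y 0 = x :=
  funext fun _ => sequentialMove_of_le (Nat.cast_nonneg _)

lemma sequentialMove_natCast : sequentialMove x y n = y :=
  funext fun i => sequentialMove_of_add_one_le (by exact_mod_cast i.isLt)

@[fun_prop]
lemma Continuous.sequentialMove {X : Type*} [TopologicalSpace X] {x y : X → Fin n → E}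
    {s : X → ℝ} (hx : Continuous x) (hy : Continuous y) (hs : Continuous s) :
    Continuous fun z => _root_.sequentialMove (x z) (y z) (s z) :=
  continuous_pi fun i => by unfold _root_.sequentialMove; fun_prop

end SequentialMove

section NoKEqual

variable {d k n : ℕ} {x y : Fin n → EuclideanSpace ℝ (Fin d)}

lemma mem_noKEqual_of_injective (hk : 2 ≤ k) (hy : Injective y) : y ∈ noKEqual d k n := by
  intro I hI
  obtain ⟨i, hi, j, hj, hij⟩ := Finset.one_lt_card.1 (by omega : 1 < I.card)
  exact ⟨i, hi, j, hj, hy.ne hij⟩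

lemma card_filter_val_eq_le_one (s : Finset (Fin n)) (m : ℕ) :
    (s.filter fun j : Fin n => (j : ℕ) = m).card ≤ 1 :=
  Finset.card_le_one.2 fun _ ha _ hb =>
    Fin.val_injective ((Finset.mem_filter.1 ha).2.trans (Finset.mem_filter.1 hb).2.symm)

lemma mem_noKEqual_succ_of_eq_of_lt (hk : 2 ≤ k) (hx : x ∈ noKEqual d k n) (m : ℕ)
    (hgt : ∀ i : Fin n, m < i → y i = x i)
    (hlt : ∀ i j : Fin n, (i : ℕ) < m → (j : ℕ) ≠ m → y j = y i → j = i) :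
    y ∈ noKEqual d (k + 1) n := by
  intro S hS
  by_contra! hconst
  have hm := card_filter_val_eq_le_one S m
  by_cases hlow : ∃ i ∈ S, (i : ℕ) < m
  · obtain ⟨i, hi, him⟩ := hlow
    have hsub : S ⊆ insert i (S.filter fun j : Fin n => (j : ℕ) = m) := fun j hj => by
      by_cases hjm : (j : ℕ) = m
      · exact Finset.mem_insert_of_mem (Finset.mem_filter.2 ⟨hj, hjm⟩)
      · exact Finset.mem_insert.2 (Or.inl (hlt i j him hjm (hconst j hj i hi)))
    have := (Finset.card_le_card hsub).trans (Finset.card_insert_le _ _)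
    omega
  · have hS' : k ≤ (S.filter fun j : Fin n => ¬ (j : ℕ) = m).card := by
      have := Finset.card_filter_add_card_filter_not (s := S) (fun j : Fin n => (j : ℕ) = m)
      omega
    obtain ⟨K, hKS, hK⟩ := Finset.exists_subset_card_eq hS'
    have hyx : ∀ a ∈ K, y a = x a := fun a ha => by
      obtain ⟨haS, ham⟩ := Finset.mem_filter.1 (hKS ha)
      exact hgt a (lt_of_le_of_ne (not_lt.1 fun h => hlow ⟨a, haS, h⟩) (Ne.symm ham))
    obtain ⟨i, hi, j, hj, hne⟩ := hx K hK
    rw [← hyx i hi, ← hyx j hj] at hne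
    exact hne (hconst i (Finset.mem_filter.1 (hKS hi)).1 j (Finset.mem_filter.1 (hKS hj)).1)

lemma sequentialMove_mem_noKEqual_succ (hk : 2 ≤ k) (hx : x ∈ noKEqual d k n)
    (hy : Injective y) (hxy : ∀ i j, y i ≠ x j) (s : ℝ) :
    sequentialMove x y s ∈ noKEqual d (k + 1) n := by
  have hmoved : ∀ i : Fin n, (i : ℕ) < ⌊s⌋₊ → sequentialMove x y s i = y i := fun i hi =>
    sequentialMove_of_add_one_le (by exact_mod_cast (Nat.le_floor_iff' (by omega)).1 hi)
  have hfixed : ∀ i : Fin n, ⌊s⌋₊ < i → sequentialMove x y s i = x i := fun i hi =>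
    sequentialMove_of_le (Nat.lt_of_floor_lt hi).le
  refine mem_noKEqual_succ_of_eq_of_lt hk hx ⌊s⌋₊ hfixed fun i j hi hj hij => ?_
  rw [hmoved i hi] at hij
  rcases Nat.lt_or_gt_of_ne hj with hj | hj
  · exact hy (by rwa [hmoved j hj] at hij)
  · exact absurd (by rwa [hfixed j hj] at hij) (hxy i j).symm

end NoKEqual

section Homotopy

open unitInterval

lemma ContinuousMap.homotopic_of_forall_mem {X Y : Type*} [TopologicalSpace X]
    [TopologicalSpace Y] {s : Set Y} {f₀ f₁ : C(X, s)} (H : I × X → Y) (hH : Continuous H)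
    (hs : ∀ p, H p ∈ s) (h₀ : ∀ x, H (0, x) = f₀ x) (h₁ : ∀ x, H (1, x) = f₁ x) :
    f₀.Homotopic f₁ :=
  ⟨{ toFun := fun p => ⟨H p, hs p⟩
     continuous_toFun := hH.subtype_mk _
     map_zero_left := fun x => Subtype.ext (h₀ x)
     map_one_left := fun x => Subtype.ext (h₁ x) }⟩

variable {d k n : ℕ}

lemma inclusion_noKEqual_succ_homotopic_of_injective_of_ne (hk : 2 ≤ k)
    (g : C(noKEqual d k n, noKEqual d (k + 1) n))
    (hg : ∀ x, Injective (g x : Fin n → EuclideanSpace ℝ (Fin d)))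
    (hgx : ∀ x i j, (g x : Fin n → EuclideanSpace ℝ (Fin d)) i ≠ x.1 j) :
    (ContinuousMap.mk (Set.inclusion (noKEqual_subset_succ d k n))
      (continuous_inclusion _)).Homotopic g :=
  ContinuousMap.homotopic_of_forall_mem
    (fun p => sequentialMove p.2.1 (g p.2).1 (n * p.1)) (by fun_prop)
    (fun p => sequentialMove_mem_noKEqual_succ hk p.2.2 (hg p.2) (hgx p.2) _)
    (fun x => by simp only [Icc.coe_zero, mul_zero, sequentialMove_zero]; rfl)
    (fun x => by simp only [Icc.coe_one, mul_one, sequentialMove_natCast])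

lemma homotopic_of_forall_eq_spread {X : Type*} [TopologicalSpace X] (hk : 2 ≤ k)
    {e : EuclideanSpace ℝ (Fin d)} (he : e ≠ 0) {f₀ f₁ : C(X, noKEqual d k n)} {r₀ r₁ : X → ℝ}
    (hr₀ : Continuous r₀) (hr₁ : Continuous r₁) (h₀ : ∀ x, (f₀ x : Fin n → _) = spread e (r₀ x))
    (h₁ : ∀ x, (f₁ x : Fin n → _) = spread e (r₁ x)) : f₀.Homotopic f₁ :=
  ContinuousMap.homotopic_of_forall_mem
    (fun p => spread e (AffineMap.lineMap (r₀ p.2) (r₁ p.2) (p.1 : ℝ))) (by fun_prop)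
    (fun _ => mem_noKEqual_of_injective hk (spread_injective he _))
    (fun x => by simp [h₀]) (fun x => by simp [h₁])

end Homotopy

/-- The inclusion `M_d^{(k)}(n) ↪ M_d^{(k+1)}(n)` is null-homotopic. -/
theorem inclusion_noKEqual_succ_nullhomotopic (d k n : ℕ) (hd : 1 ≤ d) (hk : 2 ≤ k) :
    (ContinuousMap.mk (Set.inclusion (noKEqual_subset_succ d k n))
      (continuous_inclusion _)).Nullhomotopic := by
  obtain ⟨e, he⟩ : ∃ e : EuclideanSpace ℝ (Fin d), ‖e‖ = 1 :=
    ⟨EuclideanSpace.single ⟨0, hd⟩ 1, by simp⟩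
  have he₀ : e ≠ 0 := norm_ne_zero_iff.1 (by rw [he]; exact one_ne_zero)
  have hk₁ : 2 ≤ k + 1 := by omega
  have hradius : Continuous fun x : noKEqual d k n => 1 + ∑ j, ‖x.1 j‖ :=
    continuous_const.add (continuous_finsetSum _ fun j _ =>
      ((continuous_apply j).comp continuous_subtype_val).norm)
  let far : C(noKEqual d k n, noKEqual d (k + 1) n) :=
    ⟨fun x => ⟨spread e (1 + ∑ j, ‖x.1 j‖),
      mem_noKEqual_of_injective hk₁ (spread_injective he₀ _)⟩,
      (hradius.spread e).subtype_mk _⟩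
  have far_ne (x : noKEqual d k n) (i j : Fin n) : (far x).1 i ≠ x.1 j :=
    spread_ne_of_norm_lt he (by
      linarith [Finset.single_le_sum (fun j _ => norm_nonneg (x.1 j)) (Finset.mem_univ j)]) i
  refine ⟨⟨spread e 1, mem_noKEqual_of_injective hk₁ (spread_injective he₀ 1)⟩, ?_⟩
  exact (inclusion_noKEqual_succ_homotopic_of_injective_of_ne hk far
    (fun _ => spread_injective he₀ _) far_ne).trans
    (homotopic_of_forall_eq_spread hk₁ he₀ hradius continuous_const (fun _ => rfl) (fun _ => rfl))
end

section
/- For all integers d ≥ 1, k ≥ 2, n ≥ 0, let B_d^{(k)}(n) be the subspace of (ℝ^d × ℝ)^n consisting of tuples ((c_1, r_1), …, (c_n, r_n)) with r_i > 0 and ‖c_i‖ + r_i ≤ 1 for all i (so each open ball B(c_i, r_i) lies in the unit ball of ℝ^d), and such that for every k-element subset I of {1, …, n} the intersection ⋂_{i ∈ I} B(c_i, r_i) of the corresponding open balls is empty. Then the continuous map B_d^{(k)}(n) → M_d^{(k)}(n) sending a configuration of balls to the tuple of its centers (c_1, …, c_n) is well defined and is a homotopy equivalence. -/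
/-- The space `B_d^{(k)}(n)` of configurations of `n` open balls `B(cᵢ, rᵢ)` inside the
unit ball of `ℝ^d` (`rᵢ > 0`, `‖cᵢ‖ + rᵢ ≤ 1`) such that no `k` of the balls have a
common point. -/
def ballConfig (d k n : ℕ) : Set (Fin n → EuclideanSpace ℝ (Fin d) × ℝ) :=
  {b | (∀ i, 0 < (b i).2 ∧ ‖(b i).1‖ + (b i).2 ≤ 1) ∧
       ∀ I : Finset (Fin n), I.card = k →
         (⋂ i ∈ I, Metric.ball (b i).1 (b i).2) = ∅}

/-- The centers map is well defined: the centers of a non-`k`-overlapping configuration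
of balls form a non-`k`-equal configuration of points. -/
lemma centers_mem_noKEqual (d k n : ℕ) (b : Fin n → EuclideanSpace ℝ (Fin d) × ℝ)
    (hb : b ∈ ballConfig d k n) : (fun i => (b i).1) ∈ noKEqual d k n := by
  intro I hI
  by_contra h
  push_neg at h
  have hne : I.Nonempty := by
    by_contra hne
    rw [Finset.not_nonempty_iff_eq_empty] at hne
    have h0 : (⋂ i ∈ I, Metric.ball (b i).1 (b i).2) = ∅ := hb.2 I hI
    rw [hne] at h0
    simp at h0
  obtain ⟨i0, hi0⟩ := hne
  have hmem : (b i0).1 ∈ ⋂ i ∈ I, Metric.ball (b i).1 (b i).2 := by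
    simp only [Set.mem_iInter]
    intro i hi
    rw [Metric.mem_ball, show (b i).1 = (b i0).1 from h i hi i0 hi0, dist_self]
    exact (hb.1 i).1
  rw [hb.2 I hI] at hmem
  exact hmem

/-- The continuous map `B_d^{(k)}(n) → M_d^{(k)}(n)` sending a configuration of balls to
the tuple of its centers. -/
noncomputable def centersMap (d k n : ℕ) : C(↥(ballConfig d k n), ↥(noKEqual d k n)) :=
  ContinuousMap.mk
    (fun b => ⟨fun i => ((b : Fin n → EuclideanSpace ℝ (Fin d) × ℝ) i).1,
      centers_mem_noKEqual d k n b b.2⟩)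
    (by
      apply Continuous.subtype_mk
      exact continuous_pi fun i =>
        (continuous_fst.comp ((continuous_apply i).comp continuous_subtype_val)))

/-! A point configuration `x` is sent to the balls of common radius `scale x * diagRadius k x`
around the points `scale x • x i`, where `scale x = (1 + ‖x‖)⁻¹` keeps them in the unit ball and
`diagRadius k x` is the sup-distance from `x` to the fat diagonal, truncated at `1`. Both
composites are joined to the identity by straight-line homotopies; on ball configurations one
first shrinks every radius below the common radius, because a straight line between two
configurations without `k`-fold overlaps may create one. -/

open Metric Set

theorem ContinuousMap.homotopic_of_segment_subset {X E : Type*} [TopologicalSpace X]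
    [AddCommGroup E] [TopologicalSpace E] [IsTopologicalAddGroup E] [Module ℝ E]
    [ContinuousSMul ℝ E] {S : Set E} {f g : C(X, S)}
    (h : ∀ x, segment ℝ (f x : E) (g x) ⊆ S) : f.Homotopic g := by
  let F := Homotopy.affine ((ContinuousMap.mk Subtype.val continuous_subtype_val).comp f)
    ((ContinuousMap.mk Subtype.val continuous_subtype_val).comp g)
  exact ⟨{
    toFun := fun p => ⟨F p, h p.2 (Path.range_segment (f p.2 : E) (g p.2) ▸ mem_range_self _)⟩
    continuous_toFun := F.continuous.subtype_mk _
    map_zero_left := fun x => Subtype.ext (F.apply_zero x)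
    map_one_left := fun x => Subtype.ext (F.apply_one x) }⟩

namespace NoKEqual

variable {d k n : ℕ}

theorem isOpen_noKEqual : IsOpen (noKEqual d k n) := by
  have : noKEqual d k n =
      ⋂ I ∈ {I : Finset (Fin n) | I.card = k}, ⋃ i ∈ I, ⋃ j ∈ I, {x | x i ≠ x j} := by
    ext x; simp [noKEqual]
  rw [this]
  refine (toFinite _).isOpen_biInter fun I _ => isOpen_biUnion fun i _ =>
    isOpen_biUnion fun j _ => isOpen_ne_fun (continuous_apply i) (continuous_apply j)

theorem smul_mem_noKEqual {x : Fin n → EuclideanSpace ℝ (Fin d)} (hx : x ∈ noKEqual d k n)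
    {a : ℝ} (ha : a ≠ 0) : a • x ∈ noKEqual d k n := by
  intro I hI
  obtain ⟨i, hi, j, hj, hne⟩ := hx I hI
  exact ⟨i, hi, j, hj, fun h => hne (smul_right_injective _ ha h)⟩

noncomputable def scale (x : Fin n → EuclideanSpace ℝ (Fin d)) : ℝ := (1 + ‖x‖)⁻¹

theorem scale_pos (x : Fin n → EuclideanSpace ℝ (Fin d)) : 0 < scale x :=
  inv_pos.mpr (by positivity)

theorem scale_le_one (x : Fin n → EuclideanSpace ℝ (Fin d)) : scale x ≤ 1 :=
  inv_le_one_of_one_le₀ (le_add_of_nonneg_right (norm_nonneg x))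

theorem scale_mul_norm_add_le_one (x : Fin n → EuclideanSpace ℝ (Fin d)) (i : Fin n)
    {r : ℝ} (hr : r ≤ 1) : scale x * (‖x i‖ + r) ≤ 1 := by
  calc scale x * (‖x i‖ + r) ≤ scale x * (1 + ‖x‖) :=
        mul_le_mul_of_nonneg_left (by linarith [norm_le_pi_norm x i]) (scale_pos x).le
    _ = 1 := inv_mul_cancel₀ (by positivity)

@[fun_prop]
theorem continuous_scale : Continuous (scale (d := d) (n := n)) :=
  (continuous_const.add continuous_norm).inv₀ fun x =>
    (add_pos_of_pos_of_nonneg one_pos (norm_nonneg x)).ne'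

/-- `(noKEqual d k n)ᶜ` is the fat diagonal. The distance is taken in `ℝ≥0∞` so that an empty
fat diagonal (`n < k`) gives `1` instead of the junk value `infDist x ∅ = 0`. -/
noncomputable def diagRadius (k : ℕ) (x : Fin n → EuclideanSpace ℝ (Fin d)) : ℝ :=
  (min 1 (infEDist x (noKEqual d k n)ᶜ)).toReal

theorem diagRadius_le_one (x : Fin n → EuclideanSpace ℝ (Fin d)) : diagRadius k x ≤ 1 :=
  ENNReal.toReal_le_of_le_ofReal zero_le_one (by simp)

theorem diagRadius_pos {x : Fin n → EuclideanSpace ℝ (Fin d)} (hx : x ∈ noKEqual d k n) :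
    0 < diagRadius k x := by
  have : 0 < infEDist x (noKEqual d k n)ᶜ := by
    rw [infEDist_pos_iff_notMem_closure, isOpen_noKEqual.isClosed_compl.closure_eq]
    exact not_not_intro hx
  exact ENNReal.toReal_pos_iff.mpr ⟨lt_min one_pos this, min_lt_of_left_lt ENNReal.one_lt_top⟩

theorem diagRadius_le_dist (x : Fin n → EuclideanSpace ℝ (Fin d)) {y}
    (hy : y ∉ noKEqual d k n) : diagRadius k x ≤ dist x y := by
  rw [dist_edist]
  exact ENNReal.toReal_mono (edist_ne_top x y) (min_le_of_right_le (infEDist_le_edist_of_mem hy))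

@[fun_prop]
theorem continuous_diagRadius : Continuous (diagRadius (d := d) (n := n) k) := by
  refine continuous_iff_continuousAt.mpr fun x => (ENNReal.continuousAt_toReal ?_).comp ?_
  · exact (min_le_left _ _).trans_lt ENNReal.one_lt_top |>.ne
  · exact (continuous_const.min continuous_infEDist).continuousAt

/-- A common point `p` of the balls indexed by `I` would let us move the points `x i`, `i ∈ I`,
to `μ⁻¹ • p`, reaching the fat diagonal at sup-distance less than `diagRadius k x`. -/
theorem iInter_ball_eq_empty_of_le_diagRadius {x : Fin n → EuclideanSpace ℝ (Fin d)}
    (hx : x ∈ noKEqual d k n) {b : Fin n → EuclideanSpace ℝ (Fin d) × ℝ} {μ : ℝ} (hμ : 0 < μ)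
    (hc : ∀ i, (b i).1 = μ • x i) (hr : ∀ i, (b i).2 ≤ μ * diagRadius k x)
    {I : Finset (Fin n)} (hI : I.card = k) : ⋂ i ∈ I, ball (b i).1 (b i).2 = ∅ := by
  refine eq_empty_iff_forall_notMem.mpr fun p hp => ?_
  rw [mem_iInter₂] at hp
  set y : Fin n → EuclideanSpace ℝ (Fin d) := fun i => if i ∈ I then μ⁻¹ • p else x i
  have hy : y ∉ noKEqual d k n := fun hy => by
    obtain ⟨i, hi, j, hj, hne⟩ := hy I hI
    simp [y, hi, hj] at hne
  have hxy : dist x y < diagRadius k x := by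
    refine (dist_pi_lt_iff (diagRadius_pos hx)).mpr fun i => ?_
    by_cases hi : i ∈ I
    · have hpi : dist (μ • x i) p < μ * diagRadius k x :=
        hc i ▸ (mem_ball'.mp (hp i hi)).trans_le (hr i)
      calc dist (x i) (y i) = μ⁻¹ * dist (μ • x i) p := by
            rw [← Real.norm_of_nonneg (inv_nonneg.mpr hμ.le), ← dist_smul₀, smul_smul,
              inv_mul_cancel₀ hμ.ne', one_smul]
            simp [y, hi]
        _ < diagRadius k x := by
            rw [inv_mul_lt_iff₀ hμ]; exact hpi
    · simpa [y, hi] using diagRadius_pos hx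
  exact (diagRadius_le_dist x hy).not_gt hxy

theorem mem_ballConfig_of_radius_le {b b' : Fin n → EuclideanSpace ℝ (Fin d) × ℝ}
    (hb : b ∈ ballConfig d k n) (hc : ∀ i, (b' i).1 = (b i).1)
    (hr : ∀ i, 0 < (b' i).2 ∧ (b' i).2 ≤ (b i).2) : b' ∈ ballConfig d k n := by
  refine ⟨fun i => ⟨(hr i).1, ?_⟩, fun I hI => subset_empty_iff.mp ?_⟩
  · rw [hc i]; linarith [(hb.1 i).2, (hr i).2]
  · rw [← hb.2 I hI]
    exact iInter₂_mono fun i _ => hc i ▸ ball_subset_ball (hr i).2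

theorem convex_setOf_ball_subset_unitBall :
    Convex ℝ {b : Fin n → EuclideanSpace ℝ (Fin d) × ℝ |
      ∀ i, 0 < (b i).2 ∧ ‖(b i).1‖ + (b i).2 ≤ 1} := by
  intro b hb b' hb' a a' ha ha' haa' i
  obtain ⟨hr, hn⟩ := hb i
  obtain ⟨hr', hn'⟩ := hb' i
  simp only [Pi.add_apply, Pi.smul_apply, Prod.fst_add, Prod.snd_add, Prod.smul_fst,
    Prod.smul_snd, smul_eq_mul]
  refine ⟨convex_Ioi (0 : ℝ) hr hr' ha ha' haa', ?_⟩
  calc ‖a • (b i).1 + a' • (b' i).1‖ + (a * (b i).2 + a' * (b' i).2)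
      ≤ a * (‖(b i).1‖ + (b i).2) + a' * (‖(b' i).1‖ + (b' i).2) := by
        grw [norm_add_le, norm_smul_of_nonneg ha, norm_smul_of_nonneg ha']; linarith
    _ ≤ 1 := by nlinarith

noncomputable def ballRadius (k : ℕ) (x : Fin n → EuclideanSpace ℝ (Fin d)) : ℝ :=
  scale x * diagRadius k x

theorem ballRadius_pos {x : Fin n → EuclideanSpace ℝ (Fin d)} (hx : x ∈ noKEqual d k n) :
    0 < ballRadius k x :=
  mul_pos (scale_pos x) (diagRadius_pos hx)

noncomputable def scaledBalls (k : ℕ) (x : Fin n → EuclideanSpace ℝ (Fin d)) :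
    Fin n → EuclideanSpace ℝ (Fin d) × ℝ :=
  fun i => (scale x • x i, ballRadius k x)

noncomputable def shrinkRadii (k : ℕ) (b : Fin n → EuclideanSpace ℝ (Fin d) × ℝ) :
    Fin n → EuclideanSpace ℝ (Fin d) × ℝ :=
  fun i => ((b i).1, min (b i).2 (ballRadius k fun j => (b j).1))

@[fun_prop]
theorem continuous_scaledBalls : Continuous (scaledBalls (d := d) (n := n) k) := by
  unfold scaledBalls ballRadius; fun_prop

@[fun_prop]
theorem continuous_shrinkRadii : Continuous (shrinkRadii (d := d) (n := n) k) := by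
  unfold shrinkRadii ballRadius; fun_prop

theorem scaledBalls_mem {x : Fin n → EuclideanSpace ℝ (Fin d)} (hx : x ∈ noKEqual d k n) :
    scaledBalls k x ∈ ballConfig d k n := by
  refine ⟨fun i => ⟨ballRadius_pos hx, ?_⟩,
    fun I hI => iInter_ball_eq_empty_of_le_diagRadius hx (scale_pos x) (fun _ => rfl)
      (fun _ => le_rfl) hI⟩
  simp only [scaledBalls, ballRadius, norm_smul_of_nonneg (scale_pos x).le, ← mul_add]
  exact scale_mul_norm_add_le_one x i (diagRadius_le_one x)

theorem shrinkRadii_mem {b : Fin n → EuclideanSpace ℝ (Fin d) × ℝ}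
    (hb : b ∈ ballConfig d k n) : shrinkRadii k b ∈ ballConfig d k n :=
  mem_ballConfig_of_radius_le hb (fun _ => rfl) fun i =>
    ⟨lt_min (hb.1 i).1 (ballRadius_pos (centers_mem_noKEqual d k n b hb)), min_le_left _ _⟩

noncomputable def ballsMap (d k n : ℕ) : C(noKEqual d k n, ballConfig d k n) :=
  ⟨fun x => ⟨scaledBalls k x, scaledBalls_mem x.2⟩, by fun_prop⟩

noncomputable def shrinkRadiiMap (d k n : ℕ) : C(ballConfig d k n, ballConfig d k n) :=
  ⟨fun b => ⟨shrinkRadii k b, shrinkRadii_mem b.2⟩, by fun_prop⟩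

theorem centersMap_comp_ballsMap_homotopic_id :
    ((centersMap d k n).comp (ballsMap d k n)).Homotopic (ContinuousMap.id _) := by
  refine ContinuousMap.homotopic_of_segment_subset fun x => ?_
  rintro _ ⟨a, t, ha, ht, hat, rfl⟩
  change a • (scale x.1 • x.1) + t • x.1 ∈ _
  rw [smul_smul, ← add_smul]
  have hμ : 0 < a * scale x.1 + t := by nlinarith [scale_pos x.1, scale_le_one x.1]
  exact smul_mem_noKEqual x.2 hμ.ne'

theorem id_homotopic_shrinkRadiiMap :
    (ContinuousMap.id (ballConfig d k n)).Homotopic (shrinkRadiiMap d k n) := by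
  refine ContinuousMap.homotopic_of_segment_subset fun b => ?_
  rintro _ ⟨a, t, ha, ht, hat, rfl⟩
  refine mem_ballConfig_of_radius_le b.2 (fun i => ?_) fun i => ?_
  · change a • (b.1 i).1 + t • (b.1 i).1 = _
    rw [← add_smul, hat, one_smul]
  · have hr : (shrinkRadii k b.1 i).2 ∈ Ioc 0 (b.1 i).2 :=
      ⟨((shrinkRadii_mem b.2).1 i).1, min_le_left _ _⟩
    exact convex_Ioc 0 (b.1 i).2 ⟨(b.2.1 i).1, le_rfl⟩ hr ha ht hat

theorem shrinkRadiiMap_homotopic_ballsMap_comp_centersMap :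
    (shrinkRadiiMap d k n).Homotopic ((ballsMap d k n).comp (centersMap d k n)) := by
  refine ContinuousMap.homotopic_of_segment_subset fun b => ?_
  rintro _ ⟨a, t, ha, ht, hat, rfl⟩
  set c : Fin n → EuclideanSpace ℝ (Fin d) := fun j => (b.1 j).1
  have hc : c ∈ noKEqual d k n := centers_mem_noKEqual d k n b b.2
  have hμ : scale c ≤ a + t * scale c := by nlinarith [scale_le_one c]
  refine ⟨convex_setOf_ball_subset_unitBall (shrinkRadii_mem b.2).1 (scaledBalls_mem hc).1
    ha ht hat, fun I hI => iInter_ball_eq_empty_of_le_diagRadius hc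
      ((scale_pos c).trans_le hμ) (fun i => ?_) (fun i => ?_) hI⟩
  · change a • c i + t • (scale c • c i) = (a + t * scale c) • c i
    module
  · change a * min (b.1 i).2 (ballRadius k c) + t * ballRadius k c
      ≤ (a + t * scale c) * diagRadius k c
    calc a * min (b.1 i).2 (ballRadius k c) + t * ballRadius k c
        ≤ a * ballRadius k c + t * ballRadius k c := by gcongr; exact min_le_right _ _
      _ = scale c * diagRadius k c := by rw [← add_mul, hat, one_mul, ballRadius]
      _ ≤ (a + t * scale c) * diagRadius k c := by gcongr; exact (diagRadius_pos hc).le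

end NoKEqual

theorem centersMap_homotopyEquiv_general (d k n : ℕ) :
    ∃ g : C(↥(noKEqual d k n), ↥(ballConfig d k n)),
      ((centersMap d k n).comp g).Homotopic (ContinuousMap.id _) ∧
      (g.comp (centersMap d k n)).Homotopic (ContinuousMap.id _) :=
  ⟨NoKEqual.ballsMap d k n, NoKEqual.centersMap_comp_ballsMap_homotopic_id,
    (NoKEqual.id_homotopic_shrinkRadiiMap.trans
      NoKEqual.shrinkRadiiMap_homotopic_ballsMap_comp_centersMap).symm⟩

/-- The map `B_d^{(k)}(n) → M_d^{(k)}(n)` recording the centers of the balls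
is a homotopy equivalence. -/
theorem centersMap_homotopyEquiv (d k n : ℕ) (hd : 1 ≤ d) (hk : 2 ≤ k) :
    ∃ g : C(↥(noKEqual d k n), ↥(ballConfig d k n)),
      ((centersMap d k n).comp g).Homotopic (ContinuousMap.id _) ∧
      (g.comp (centersMap d k n)).Homotopic (ContinuousMap.id _) :=
  centersMap_homotopyEquiv_general d k n
end

section
/- For every integer k ≥ 1, the series g(x) = Σ_{j=0}^∞ x^{j+k} / ((j+k) · j!) converges for every real x, and the resulting function g : ℝ → ℝ has derivative g′(x) = x^{k−1} e^x at every real x. -/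
/-!
Differentiate term by term: the `j`-th term has derivative `x ^ (k - 1) * (x ^ j / j !)`, so the
differentiated series is `x ^ (k - 1)` times the exponential series. On the ball of radius
`R = ‖x‖ + 1` these derivatives are dominated by the summable `R ^ (k - 1) * (R ^ j / j !)`, and at
`0` every term vanishes, so the series converges near `x` and may be differentiated termwise there.
-/

open Nat

lemma hasDerivAt_pow_add_div_mul_factorial (j : ℕ) {k : ℕ} (hk : 1 ≤ k) (y : ℝ) :
    HasDerivAt (fun y : ℝ => y ^ (j + k) / ((j + k : ℝ) * j !))
      (y ^ (k - 1) * (y ^ j / j !)) y := by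
  have hjk : (j + k : ℝ) ≠ 0 := by positivity
  refine ((hasDerivAt_pow (j + k) y).div_const ((j + k : ℝ) * j !)).congr_deriv ?_
  rw [show j + k - 1 = (k - 1) + j by omega, pow_add]
  push_cast
  field_simp

lemma norm_pow_mul_pow_div_factorial_le {y R : ℝ} (hy : ‖y‖ ≤ R) (m j : ℕ) :
    ‖y ^ m * (y ^ j / j !)‖ ≤ R ^ m * (R ^ j / j !) := by
  rw [norm_mul, norm_div, norm_pow, norm_pow, RCLike.norm_natCast]
  have := (norm_nonneg y).trans hy
  gcongr

lemma tsum_pow_mul_pow_div_factorial (m : ℕ) (y : ℝ) :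
    ∑' j : ℕ, y ^ m * (y ^ j / j !) = y ^ m * Real.exp y := by
  rw [tsum_mul_left, Real.exp_eq_exp_ℝ, (NormedSpace.expSeries_div_hasSum_exp y).tsum_eq]

/-- For `k ≥ 1`, the series `g(x) = Σ_{j≥0} x^{j+k} / ((j+k)·j!)` converges for every
real `x`, and `g` has derivative `g'(x) = x^{k-1}·eˣ` at every real `x`. -/
theorem series_summable_and_hasDerivAt (k : ℕ) (hk : 1 ≤ k) :
    (∀ x : ℝ, Summable fun j : ℕ => x ^ (j + k) / ((j + k : ℝ) * (Nat.factorial j : ℝ))) ∧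
    (∀ x : ℝ, HasDerivAt
      (fun y : ℝ => ∑' j : ℕ, y ^ (j + k) / ((j + k : ℝ) * (Nat.factorial j : ℝ)))
      (x ^ (k - 1) * Real.exp x) x) := by
  have local_at : ∀ x : ℝ,
      (Summable fun j : ℕ => x ^ (j + k) / ((j + k : ℝ) * (Nat.factorial j : ℝ))) ∧
      HasDerivAt (fun y : ℝ => ∑' j : ℕ, y ^ (j + k) / ((j + k : ℝ) * (Nat.factorial j : ℝ)))
        (x ^ (k - 1) * Real.exp x) x := by
    intro x
    set R := ‖x‖ + 1
    have hx : x ∈ Metric.ball (0 : ℝ) R := by simp [R]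
    have h0 : (0 : ℝ) ∈ Metric.ball (0 : ℝ) R := by rw [mem_ball_zero_iff, norm_zero]; positivity
    have hu := (Real.summable_pow_div_factorial R).mul_left (R ^ (k - 1))
    have hderiv := fun j y (_ : y ∈ Metric.ball (0 : ℝ) R) =>
      hasDerivAt_pow_add_div_mul_factorial j hk y
    have hbound := fun j y (hy : y ∈ Metric.ball (0 : ℝ) R) =>
      norm_pow_mul_pow_div_factorial_le (mem_ball_zero_iff.1 hy).le (k - 1) j
    have hsum0 : Summable fun j : ℕ => (0 : ℝ) ^ (j + k) / ((j + k : ℝ) * j !) := by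
      refine summable_zero.congr fun j => ?_
      rw [zero_pow (by omega : j + k ≠ 0), zero_div]
    refine ⟨summable_of_summable_hasDerivAt_of_isPreconnected hu Metric.isOpen_ball
      (convex_ball _ _).isPreconnected hderiv hbound h0 hsum0 hx, ?_⟩
    rw [← tsum_pow_mul_pow_div_factorial]
    exact hasDerivAt_tsum_of_isPreconnected hu Metric.isOpen_ball
      (convex_ball _ _).isPreconnected hderiv hbound h0 hsum0 hx
  exact ⟨fun x => (local_at x).1, fun x => (local_at x).2⟩
end

section
/- Let n ≥ k ≥ 2 be integers. In the group algebra ℚ[Σ_n] of the symmetric group Σ_n, let a = Σ_σ sgn(σ)·σ, the sum over all permutations σ of {1, …, n} fixing each of k+1, …, n, and let b = Σ_τ τ, the sum over all permutations τ fixing each of 2, …, k. Then the left ideal ℚ[Σ_n]·(a·b), i.e. the ℚ-linear span of the elements g·a·b for g ∈ Σ_n, has dimension binom(n−1, k−1) as a ℚ-vector space. -/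
open Equiv MonoidAlgebra

/-- The antisymmetrizer `a = Σ_σ sgn(σ)·σ` over permutations of `{1,…,n}` fixing each of
`k+1,…,n` (in zero-based indexing: fixing every index `≥ k`). -/
noncomputable def hookA (n k : ℕ) : MonoidAlgebra ℚ (Equiv.Perm (Fin n)) :=
  ∑ σ ∈ Finset.univ.filter (fun σ : Equiv.Perm (Fin n) => ∀ i : Fin n, k ≤ (i : ℕ) → σ i = i),
    MonoidAlgebra.single σ ((Equiv.Perm.sign σ : ℤ) : ℚ)

/-- The symmetrizer `b = Σ_τ τ` over permutations of `{1,…,n}` fixing each of `2,…,k`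
(in zero-based indexing: fixing every index `i` with `1 ≤ i < k`). -/
noncomputable def hookB (n k : ℕ) : MonoidAlgebra ℚ (Equiv.Perm (Fin n)) :=
  ∑ τ ∈ Finset.univ.filter
      (fun τ : Equiv.Perm (Fin n) => ∀ i : Fin n, 1 ≤ (i : ℕ) → (i : ℕ) < k → τ i = i),
    MonoidAlgebra.single τ (1 : ℚ)

/-!
Put `S = {i | i < k}` and `z = 0`: `a` is the signed sum over the permutations of `S`, `b` the sum
over the permutations fixing `S \ {z}`, and `e = a * b`. For `s` permuting `S` and `u` fixing `S`
pointwise, `g s u * e = sgn s • (g * e)`, so up to sign `g * e` depends only on the set `g '' S`.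
If `z ∉ g '' S`, say `g m = z`, then the antisymmetrizer over `S ∪ {m}` times `b` vanishes, since
the odd permutation `swap z m` lies in both groups; splitting that antisymmetrizer into cosets of
the permutations of `S` gives the Garnir relation `g * e = ∑ j ∈ S, g (j m) * e`, whose terms all
have `z ∈ g (j m) '' S`. So the `g_D * e`, with `g_D` fixing `z` and carrying `S \ {z}` onto a
`(k-1)`-subset `D` of the complement of `z`, span the ideal. They are independent because the
coefficient of `g_D` in `g_D' * e` is `δ_{D D'}`: `a` is supported on permutations preserving `S`,
`b` on permutations fixing `S \ {z}`, and these two groups meet trivially.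
-/

open Finset

namespace Equiv.Perm

variable {α : Type*} {S : Finset α}

abbrev fixing (S : Finset α) : Subgroup (Perm α) := fixingSubgroup (Perm α) (S : Set α)

@[simp]
theorem mem_fixing {σ : Perm α} : σ ∈ fixing S ↔ ∀ i ∈ S, σ i = i := by
  simp [mem_fixingSubgroup_iff]

instance [DecidableEq α] (S : Finset α) : DecidablePred (· ∈ fixing S) := fun _ =>
  decidable_of_iff _ mem_fixing.symm

variable [DecidableEq α]

theorem swap_mul_mem_fixing_iff {m j : α} (hm : m ∈ S) (hj : j ∉ S) {σ : Perm α} :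
    swap j m * σ ∈ fixing S ↔ σ ∈ fixing (S.erase m) ∧ σ m = j := by
  have hswap : ∀ i ∈ S, i ≠ m → swap j m i = i := fun i hi him =>
    swap_apply_of_ne_of_ne (fun h => hj (h ▸ hi)) him
  simp only [mem_fixing, mem_erase, Perm.mul_apply, swap_apply_eq_iff]
  constructor
  · exact fun h => ⟨fun i hi => (h i hi.2).trans (hswap i hi.2 hi.1),
      (h m hm).trans (swap_apply_right j m)⟩
  · rintro ⟨hfix, hσm⟩ i hi
    by_cases him : i = m
    · rw [him, hσm, swap_apply_right]
    · rw [hswap i hi him, hfix i ⟨him, hi⟩]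

variable [Fintype α]

theorem apply_mem_of_mem_fixing_compl {σ : Perm α} (hσ : σ ∈ fixing Sᶜ) {i : α} (hi : i ∈ S) :
    σ i ∈ S := by
  by_contra h
  have : σ (σ i) = σ i := mem_fixing.1 hσ _ (mem_compl.2 h)
  rw [σ.injective this] at h
  exact h hi

theorem commute_of_mem_fixing_compl {σ u : Perm α} (hσ : σ ∈ fixing Sᶜ) (hu : u ∈ fixing S) :
    Commute σ u :=
  Disjoint.commute fun x => by
    by_cases hx : x ∈ S
    · exact .inr (mem_fixing.1 hu x hx)
    · exact .inl (mem_fixing.1 hσ x (mem_compl.2 hx))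

theorem exists_mul_eq_of_forall_apply_mem_iff {p : Perm α} (hp : ∀ x, p x ∈ S ↔ x ∈ S) :
    ∃ s ∈ fixing Sᶜ, ∃ u ∈ fixing S, s * u = p := by
  set s := ofSubtype (p.subtypePerm hp)
  refine ⟨s, ?_, s⁻¹ * p, ?_, mul_inv_cancel_left s p⟩
  · simp only [mem_fixing, mem_compl]
    exact fun x hx => ofSubtype_apply_of_not_mem _ hx
  · simp only [mem_fixing, coe_mul, Function.comp_apply, inv_eq_iff_eq]
    exact fun x hx => (ofSubtype_apply_of_mem (p.subtypePerm hp) hx).symm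

theorem fixing_compl_inf_fixing_erase (z : α) : fixing Sᶜ ⊓ fixing (S.erase z) = ⊥ := by
  rw [← fixingSubgroup_union, eq_bot_iff]
  intro σ hσ
  have hfix : ∀ x ≠ z, σ x = x := fun x hx =>
    (mem_fixingSubgroup_iff _).1 hσ x (by by_cases x ∈ S <;> simp [*])
  rw [Subgroup.mem_bot]
  ext x
  by_cases hx : x = z
  · subst hx
    by_contra h
    exact h (σ.injective (hfix _ h))
  · simp [hfix x hx]

theorem exists_apply_eq_self_image_eq {A B : Finset α} {z : α} (h : #A = #B) (hA : z ∉ A)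
    (hB : z ∉ B) : ∃ g : Perm α, g z = z ∧ A.image g = B := by
  let e : {x // x ∈ A} ≃ {x // x ∈ B} := Fintype.equivOfCardEq (by simpa using h)
  set p := e.extendSubtype
  have hpA : ∀ x ∈ A, p x ∈ B := fun x hx => extendSubtype_mem e x hx
  refine ⟨swap (p z) z * p, by simp, eq_of_subset_of_card_le ?_ ?_⟩
  · intro y hy
    obtain ⟨x, hx, rfl⟩ := mem_image.1 hy
    have hxz : x ≠ z := fun h => hA (h ▸ hx)
    have hpxz : p x ≠ z := fun h => hB (h ▸ hpA x hx)
    rw [coe_mul, Function.comp_apply, swap_apply_of_ne_of_ne (p.injective.ne hxz) hpxz]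
    exact hpA x hx
  · rw [card_image_of_injective _ (Equiv.injective _), h]

end Equiv.Perm

namespace MonoidAlgebra

open Perm

section Subgroup

variable {R G : Type*} [Semiring R] [Group G] [Fintype G] (H : Subgroup G) [DecidablePred (· ∈ H)]

theorem single_one_mul_sum_subgroup {s : G} (hs : s ∈ H) (c : G → R) :
    single s 1 * ∑ g ∈ univ.filter (· ∈ H), single g (c g) =
      ∑ g ∈ univ.filter (· ∈ H), single g (c (s⁻¹ * g)) := by
  rw [mul_sum]
  refine sum_equiv (Equiv.mulLeft s) (by simp [H.mul_mem_cancel_left hs]) fun g _ => ?_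
  simp [single_mul_single]

theorem sum_subgroup_mul_single_one {s : G} (hs : s ∈ H) (c : G → R) :
    (∑ g ∈ univ.filter (· ∈ H), single g (c g)) * single s 1 =
      ∑ g ∈ univ.filter (· ∈ H), single g (c (g * s⁻¹)) := by
  rw [sum_mul]
  refine sum_equiv (Equiv.mulRight s) (by simp [H.mul_mem_cancel_right hs]) fun g _ => ?_
  simp [single_mul_single]

variable (R) in
noncomputable def symmetrizer : R[G] := ∑ g ∈ univ.filter (· ∈ H), single g 1

theorem single_one_mul_symmetrizer {s : G} (hs : s ∈ H) :
    single s 1 * symmetrizer R H = symmetrizer R H :=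
  single_one_mul_sum_subgroup H hs _

theorem coeff_symmetrizer [DecidableEq G] (g : G) :
    (symmetrizer R H).coeff g = if g ∈ H then 1 else 0 := by
  simp [symmetrizer, coeff_sum, coeff_single, Finsupp.single_apply]

end Subgroup

section Sign

variable {R α : Type*} [CommRing R] [Fintype α] [DecidableEq α]
  {H K : Subgroup (Perm α)} [DecidablePred (· ∈ H)] [DecidablePred (· ∈ K)]

variable (R H) in
noncomputable def antisymmetrizer : R[Perm α] :=
  ∑ σ ∈ univ.filter (· ∈ H), single σ ((sign σ : ℤ) : R)

theorem single_one_mul_antisymmetrizer {s : Perm α} (hs : s ∈ H) :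
    single s 1 * antisymmetrizer R H = (sign s : ℤ) • antisymmetrizer R H := by
  rw [antisymmetrizer, single_one_mul_sum_subgroup H hs, smul_sum]
  refine sum_congr rfl fun σ _ => ?_
  simp [zsmul_eq_mul]

theorem antisymmetrizer_mul_single_one {s : Perm α} (hs : s ∈ H) :
    antisymmetrizer R H * single s 1 = (sign s : ℤ) • antisymmetrizer R H := by
  rw [antisymmetrizer, sum_subgroup_mul_single_one H hs, smul_sum]
  refine sum_congr rfl fun σ _ => ?_
  simp [zsmul_eq_mul, mul_comm]

theorem commute_single_one_antisymmetrizer {u : Perm α} (hu : ∀ σ ∈ H, Commute u σ) :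
    Commute (single u 1) (antisymmetrizer R H) :=
  Commute.sum_right _ _ _ fun σ hσ => by
    simp [Commute, SemiconjBy, single_mul_single, (hu σ (by simpa using hσ)).eq]

theorem coeff_antisymmetrizer_mul (y : R[Perm α]) (p : Perm α) :
    (antisymmetrizer R H * y).coeff p =
      ∑ σ ∈ univ.filter (· ∈ H), (sign σ : R) * y.coeff (σ⁻¹ * p) := by
  simp [antisymmetrizer, sum_mul, coeff_sum]

theorem coeff_one_antisymmetrizer_mul_symmetrizer (hHK : H ⊓ K = ⊥) :
    (antisymmetrizer R H * symmetrizer R K).coeff 1 = 1 := by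
  rw [coeff_antisymmetrizer_mul, sum_eq_single 1]
  · simp [coeff_symmetrizer]
  · intro σ hσ hσ1
    have hσK : σ ∉ K := fun h =>
      hσ1 (by simpa [hHK] using Subgroup.mem_inf.2 ⟨(mem_filter.1 hσ).2, h⟩)
    simp [coeff_symmetrizer, hσK]
  · simp [H.one_mem]

theorem exists_mem_inv_mul_mem_of_coeff_antisymmetrizer_mul_symmetrizer_ne_zero {p : Perm α}
    (h : (antisymmetrizer R H * symmetrizer R K).coeff p ≠ 0) : ∃ σ ∈ H, σ⁻¹ * p ∈ K := by
  rw [coeff_antisymmetrizer_mul] at h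
  obtain ⟨σ, hσ, hne⟩ := exists_ne_zero_of_sum_ne_zero h
  refine ⟨σ, (mem_filter.1 hσ).2, ?_⟩
  by_contra hK
  simp [coeff_symmetrizer, hK] at hne

theorem antisymmetrizer_mul_symmetrizer_eq_zero {F : Type*} [Field F] [NeZero (2 : F)]
    {t : Perm α} (htH : t ∈ H) (htK : t ∈ K) (ht : sign t = -1) :
    antisymmetrizer F H * symmetrizer F K = 0 := by
  have hx : antisymmetrizer F H * symmetrizer F K = -(antisymmetrizer F H * symmetrizer F K) := by
    conv_lhs => rw [← single_one_mul_symmetrizer K htK, ← mul_assoc,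
      antisymmetrizer_mul_single_one htH, ht]
    simp
  have h2 : (2 : F) • (antisymmetrizer F H * symmetrizer F K) = 0 := by
    rw [two_smul]; nth_rewrite 2 [hx]; exact add_neg_cancel _
  exact (smul_eq_zero.mp h2).resolve_left two_ne_zero

end Sign

section Garnir

variable {α : Type*} [Fintype α] [DecidableEq α] {S : Finset α} {m : α}

theorem antisymmetrizer_fixing_erase {R : Type*} [CommRing R] (hm : m ∈ S) :
    antisymmetrizer R (fixing (S.erase m)) =
      antisymmetrizer R (fixing S) -
        ∑ j ∈ Sᶜ, single (swap j m) 1 * antisymmetrizer R (fixing S) := by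
  have hmaps : ∀ σ ∈ univ.filter (· ∈ fixing (S.erase m)), σ m ∈ insert m Sᶜ := by
    intro σ hσ
    simp only [mem_filter, mem_univ, true_and, mem_fixing, mem_erase] at hσ
    simp only [mem_insert, mem_compl]
    by_contra! h
    exact h.1 (σ.injective (hσ _ ⟨h.1, h.2⟩))
  rw [antisymmetrizer, ← sum_fiberwise_of_maps_to hmaps, sum_insert (by simpa using hm),
    sub_eq_add_neg, ← sum_neg_distrib]
  -- the fibre `σ m = m` is `fixing S`; on the fibre `σ m = j ∉ S`, `swap j m * σ ∈ fixing S`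
  congr 1
  · refine sum_congr (Finset.ext fun σ => ?_) fun _ _ => rfl
    simp only [mem_filter, mem_univ, true_and, mem_fixing, mem_erase]
    refine ⟨fun h i hi => ?_, fun h => ⟨fun i hi => h i hi.2, h m hm⟩⟩
    by_cases him : i = m
    · exact him ▸ h.2
    · exact h.1 i ⟨him, hi⟩
  · refine sum_congr rfl fun j hj => ?_
    have hjm : j ≠ m := fun h => (mem_compl.1 hj) (h ▸ hm)
    rw [antisymmetrizer, mul_sum, ← sum_neg_distrib]
    refine sum_equiv (Equiv.mulLeft (swap j m)) (fun σ => ?_) fun σ _ => ?_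
    · simpa using (swap_mul_mem_fixing_iff hm (mem_compl.1 hj)).symm
    · simp [single_mul_single, sign_swap hjm, ← mul_assoc]

theorem antisymmetrizer_mul_symmetrizer_eq_sum_swap {F : Type*} [Field F] [NeZero (2 : F)]
    {K : Subgroup (Perm α)} [DecidablePred (· ∈ K)] {t : α} (hm : m ∈ S) (ht : t ∉ S)
    (hK : swap t m ∈ K) :
    antisymmetrizer F (fixing S) * symmetrizer F K =
      ∑ j ∈ Sᶜ, single (swap j m) 1 * (antisymmetrizer F (fixing S) * symmetrizer F K) := by
  have htm : t ≠ m := fun h => ht (h ▸ hm)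
  have hswap : swap t m ∈ fixing (S.erase m) := mem_fixing.2 fun i hi =>
    swap_apply_of_ne_of_ne (fun h => ht (h ▸ mem_of_mem_erase hi)) (ne_of_mem_erase hi)
  have h0 := antisymmetrizer_mul_symmetrizer_eq_zero (F := F) hswap hK (sign_swap htm)
  rw [antisymmetrizer_fixing_erase hm, sub_mul, sub_eq_zero, sum_mul] at h0
  simpa only [mul_assoc] using h0

end Garnir

section Hook

variable (F : Type*) [Field F] {α : Type*} [Fintype α] [DecidableEq α]

noncomputable def hookSymmetrizer (S : Finset α) (z : α) : F[Perm α] :=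
  antisymmetrizer F (fixing Sᶜ) * symmetrizer F (fixing (S.erase z))

variable {F} {S : Finset α} {z : α}

theorem single_mul_hookSymmetrizer_of_mem {s u : Perm α} (hs : s ∈ fixing Sᶜ)
    (hu : u ∈ fixing S) :
    single (s * u) 1 * hookSymmetrizer F S z = (sign s : ℤ) • hookSymmetrizer F S z := by
  have hu' : u ∈ fixing (S.erase z) := fixingSubgroup_antitone _ _ (by simp) hu
  have hcomm : Commute (single u (1 : F)) (antisymmetrizer F (fixing Sᶜ)) :=
    commute_single_one_antisymmetrizer fun σ hσ => (commute_of_mem_fixing_compl hσ hu).symm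
  rw [← one_mul (1 : F), ← single_mul_single, hookSymmetrizer, mul_assoc,
    ← mul_assoc (single u 1), hcomm.eq, mul_assoc, single_one_mul_symmetrizer _ hu',
    ← mul_assoc, single_one_mul_antisymmetrizer hs, smul_mul_assoc]

theorem hookSymmetrizer_eq_sum_swap [NeZero (2 : F)] (hz : z ∈ S) {m : α} (hm : m ∉ S) :
    hookSymmetrizer F S z = ∑ j ∈ S, single (swap j m) 1 * hookSymmetrizer F S z := by
  have hK : swap z m ∈ fixing (S.erase z) := mem_fixing.2 fun i hi =>
    swap_apply_of_ne_of_ne (ne_of_mem_erase hi) (fun h => hm (h ▸ mem_of_mem_erase hi))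
  have h := antisymmetrizer_mul_symmetrizer_eq_sum_swap (F := F) (S := Sᶜ)
    (mem_compl.2 hm) (notMem_compl.2 hz) hK
  rw [compl_compl] at h
  exact h

theorem coeff_one_hookSymmetrizer : (hookSymmetrizer F S z).coeff 1 = 1 :=
  coeff_one_antisymmetrizer_mul_symmetrizer (fixing_compl_inf_fixing_erase z)

theorem apply_mem_of_coeff_hookSymmetrizer_ne_zero {p : Perm α}
    (h : (hookSymmetrizer F S z).coeff p ≠ 0) {i : α} (hi : i ∈ S.erase z) : p i ∈ S := by
  obtain ⟨σ, hσ, hτ⟩ := exists_mem_inv_mul_mem_of_coeff_antisymmetrizer_mul_symmetrizer_ne_zero h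
  have : (σ⁻¹ * p) i = i := mem_fixing.1 hτ i hi
  rw [Perm.mul_apply, inv_eq_iff_eq] at this
  rw [this]
  exact apply_mem_of_mem_fixing_compl hσ (mem_of_mem_erase hi)

variable (S z) in
abbrev HookIndex : Type _ := (powersetCard #(S.erase z) (univ.erase z) : Finset (Finset α))

theorem notMem_hookIndex (D : HookIndex S z) : z ∉ (D : Finset α) := fun h => by
  simpa using (mem_powersetCard.1 D.2).1 h

theorem exists_apply_eq_self_image_erase_eq (D : HookIndex S z) :
    ∃ g : Perm α, g z = z ∧ (S.erase z).image g = D :=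
  exists_apply_eq_self_image_eq (mem_powersetCard.1 D.2).2.symm (notMem_erase z S)
    (notMem_hookIndex D)

noncomputable def hookRep (D : HookIndex S z) : Perm α :=
  (exists_apply_eq_self_image_erase_eq D).choose

theorem hookRep_apply_self (D : HookIndex S z) : hookRep D z = z :=
  (exists_apply_eq_self_image_erase_eq D).choose_spec.1

theorem image_erase_hookRep (D : HookIndex S z) : (S.erase z).image (hookRep D) = D :=
  (exists_apply_eq_self_image_erase_eq D).choose_spec.2

theorem image_hookRep (hz : z ∈ S) (D : HookIndex S z) :
    S.image (hookRep D) = insert z (D : Finset α) := by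
  calc S.image (hookRep D) = (insert z (S.erase z)).image (hookRep D) := by rw [insert_erase hz]
    _ = insert z (D : Finset α) := by
      rw [image_insert, image_erase_hookRep, hookRep_apply_self]

theorem coeff_single_hookRep_mul_hookSymmetrizer (hz : z ∈ S) (D D' : HookIndex S z) :
    (single (hookRep D') 1 * hookSymmetrizer F S z).coeff (hookRep D) =
      if D' = D then 1 else 0 := by
  rw [coeff_single_mul_apply, one_mul]
  split_ifs with h
  · rw [h, inv_mul_cancel, coeff_one_hookSymmetrizer]
  by_contra hne
  have hsub : (D : Finset α) ⊆ D' := by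
    intro x hx
    obtain ⟨i, hi, rfl⟩ := mem_image.1 (image_erase_hookRep D ▸ hx)
    have hmem : hookRep D i ∈ S.image (hookRep D') := mem_image.2
      ⟨_, apply_mem_of_coeff_hookSymmetrizer_ne_zero hne hi, by simp⟩
    rw [image_hookRep hz] at hmem
    refine (mem_insert.1 hmem).resolve_left fun h => notMem_hookIndex D ?_
    rwa [h] at hx
  have hcard : #(D' : Finset α) ≤ #(D : Finset α) := by
    rw [(mem_powersetCard.1 D.2).2, (mem_powersetCard.1 D'.2).2]
  exact h (Subtype.ext (eq_of_subset_of_card_le hsub hcard).symm)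

theorem linearIndependent_single_hookRep_mul_hookSymmetrizer (hz : z ∈ S) :
    LinearIndependent F fun D : HookIndex S z => single (hookRep D) 1 * hookSymmetrizer F S z := by
  rw [linearIndependent_iff']
  intro s c hsum D hD
  have := congrArg (fun x => x.coeff (hookRep D)) hsum
  simp only [coeff_sum, coeff_smul, Finsupp.finsetSum_apply, Finsupp.smul_apply, smul_eq_mul,
    coeff_single_hookRep_mul_hookSymmetrizer hz, mul_ite, mul_one, mul_zero, sum_ite_eq',
    coeff_zero, Finsupp.zero_apply] at this
  simpa [hD] using this

theorem single_mul_hookSymmetrizer_mem_span_of_inv_apply_mem (hz : z ∈ S) {g : Perm α}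
    (hg : g⁻¹ z ∈ S) :
    single g 1 * hookSymmetrizer F S z ∈ Submodule.span F
      (Set.range fun D : HookIndex S z => single (hookRep D) 1 * hookSymmetrizer F S z) := by
  have hzg : z ∈ S.image g := mem_image.2 ⟨_, hg, by simp⟩
  let D : HookIndex S z := ⟨(S.image g).erase z, mem_powersetCard.2
    ⟨erase_subset_erase _ (subset_univ _), by
      rw [card_erase_of_mem hzg, card_image_of_injective _ g.injective, card_erase_of_mem hz]⟩⟩
  have himage : S.image (hookRep D) = S.image g := by rw [image_hookRep hz, insert_erase hzg]
  obtain ⟨s, hs, u, hu, hsu⟩ := exists_mul_eq_of_forall_apply_mem_iff (p := (hookRep D)⁻¹ * g)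
    (S := S) fun x => by
      rw [← (hookRep D).injective.mem_finset_image, ← Perm.mul_apply, mul_inv_cancel_left,
        himage, g.injective.mem_finset_image]
  have hsingle : single g (1 : F) = single (hookRep D) 1 * single (s * u) 1 := by
    rw [single_mul_single, mul_one, hsu, mul_inv_cancel_left]
  rw [hsingle, mul_assoc, single_mul_hookSymmetrizer_of_mem hs hu, mul_smul_comm]
  apply zsmul_mem
  exact Submodule.subset_span (Set.mem_range_self D)

theorem single_mul_hookSymmetrizer_mem_span [NeZero (2 : F)] (hz : z ∈ S) (g : Perm α) :
    single g 1 * hookSymmetrizer F S z ∈ Submodule.span F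
      (Set.range fun D : HookIndex S z => single (hookRep D) 1 * hookSymmetrizer F S z) := by
  by_cases hg : g⁻¹ z ∈ S
  · exact single_mul_hookSymmetrizer_mem_span_of_inv_apply_mem hz hg
  have hsum : single g 1 * hookSymmetrizer F S z =
      ∑ j ∈ S, single (g * swap j (g⁻¹ z)) 1 * hookSymmetrizer F S z := by
    conv_lhs => rw [hookSymmetrizer_eq_sum_swap hz hg]
    simp only [mul_sum, ← mul_assoc, single_mul_single, one_mul]
  rw [hsum]
  exact Submodule.sum_mem _ fun j hj =>
    single_mul_hookSymmetrizer_mem_span_of_inv_apply_mem hz (by simpa using hj)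

theorem finrank_span_single_mul_hookSymmetrizer [NeZero (2 : F)] (hz : z ∈ S) :
    Module.finrank F (Submodule.span F
      (Set.range fun g : Perm α => single g 1 * hookSymmetrizer F S z)) =
      (Fintype.card α - 1).choose (#S - 1) := by
  have hspan : Submodule.span F (Set.range fun g : Perm α => single g 1 * hookSymmetrizer F S z) =
      Submodule.span F
        (Set.range fun D : HookIndex S z => single (hookRep D) 1 * hookSymmetrizer F S z) :=
    le_antisymm
      (Submodule.span_le.2 <| Set.range_subset_iff.2 <| single_mul_hookSymmetrizer_mem_span hz)
      (Submodule.span_mono <| Set.range_subset_iff.2 fun D => Set.mem_range_self _)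
  rw [hspan, finrank_span_eq_card (linearIndependent_single_hookRep_mul_hookSymmetrizer hz),
    Fintype.card_coe, card_powersetCard, card_erase_of_mem (mem_univ z), card_univ,
    card_erase_of_mem hz]

end Hook

end MonoidAlgebra

theorem hookA_eq_antisymmetrizer (n k : ℕ) :
    hookA n k = antisymmetrizer ℚ (Perm.fixing (univ.filter fun i : Fin n => (i : ℕ) < k)ᶜ) :=
  sum_congr (Finset.ext fun σ => by simp) fun _ _ => rfl

theorem hookB_eq_symmetrizer (n k : ℕ) [NeZero n] :
    hookB n k =
      symmetrizer ℚ (Perm.fixing ((univ.filter fun i : Fin n => (i : ℕ) < k).erase 0)) :=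
  sum_congr (Finset.ext fun σ => by simp [Nat.one_le_iff_ne_zero]) fun _ _ => rfl

/-- The ℚ-linear span of the elements `g·a·b`, `g ∈ Σₙ`, i.e. the left ideal
`ℚ[Σₙ]·(a·b)`, has dimension `binom(n-1, k-1)`. -/
theorem hook_ideal_finrank (n k : ℕ) (hk : 2 ≤ k) (hn : k ≤ n) :
    Module.finrank ℚ
      ↥(Submodule.span ℚ (Set.range fun g : Equiv.Perm (Fin n) =>
          MonoidAlgebra.single g (1 : ℚ) * (hookA n k * hookB n k))) =
      Nat.choose (n - 1) (k - 1) := by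
  have : NeZero n := ⟨by omega⟩
  have hz : (0 : Fin n) ∈ univ.filter fun i : Fin n => (i : ℕ) < k := by simp; omega
  rw [hookA_eq_antisymmetrizer, hookB_eq_symmetrizer]
  exact (finrank_span_single_mul_hookSymmetrizer hz).trans
    (by simp [Fin.card_filter_val_lt, hn])
end
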